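/- If there exists a normalized ψ ∈ C₀^∞(ℝ⁶) with ⟨ψ, (√(-Δ₁) + √(-Δ₂))ψ⟩ < Q⟨ψ, |r₁-r₂|⁻¹ ψ⟩, then the relativistic two-body Coulomb Hamiltonian H = √(-Δ₁+1) + √(-Δ₂+1) - 2 - Q/|r₁-r₂| is unbounded below: inf over normalized ψ ∈ C₀^∞ of ⟨ψ, Hψ⟩ = -∞. -/

import Mathlib

open MeasureTheory
open scoped FourierTransform

noncomputable section

/-- Split a point of `ℝ⁶` into its two `ℝ³` components `(r₁, r₂)`. -/
def split (x : EuclideanSpace ℝ (Fin 6)) : EuclideanSpace ℝ (Fin 3) × EuclideanSpace ℝ (Fin 3) :=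
  ((WithLp.toLp 2 (fun i => x (Fin.castAdd 3 i)) : EuclideanSpace ℝ (Fin 3)),
   (WithLp.toLp 2 (fun i => x (Fin.natAdd 3 i)) : EuclideanSpace ℝ (Fin 3)))

/-- The quadratic form of `√(-Δ₁+c²) - c + √(-Δ₂+c²) - c` on `L²(ℝ³×ℝ³) = L²(ℝ⁶)`, defined
via the Fourier transform as the multiplier `√(|p|²+c²) - c` in each of the two variables;
`c = 0` gives the massless operator `√(-Δ₁) + √(-Δ₂)`. -/
def kinForm (c : ℝ) (ψ : EuclideanSpace ℝ (Fin 6) → ℂ) : ℝ :=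
  ∫ p : EuclideanSpace ℝ (Fin 6),
    ((Real.sqrt (‖(split p).1‖ ^ 2 + c ^ 2) - c)
      + (Real.sqrt (‖(split p).2‖ ^ 2 + c ^ 2) - c)) * ‖𝓕 ψ p‖ ^ 2

/-- The quadratic form of the Coulomb potential `|r₁ - r₂|⁻¹`. -/
def coulForm (ψ : EuclideanSpace ℝ (Fin 6) → ℂ) : ℝ :=
  ∫ x : EuclideanSpace ℝ (Fin 6), ‖(split x).1 - (split x).2‖⁻¹ * ‖ψ x‖ ^ 2

/- ### Auxiliary material -/

open scoped RealInnerProductSpace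

local notation "E6" => EuclideanSpace ℝ (Fin 6)

lemma split_smul (c : ℝ) (x : E6) : split (c • x) = c • split x := rfl

lemma norm_split_fst_le (q : E6) : ‖(split q).1‖ ≤ ‖q‖ := by
  rw [EuclideanSpace.norm_eq, EuclideanSpace.norm_eq]
  apply Real.sqrt_le_sqrt
  simp only [Real.norm_eq_abs, sq_abs]
  show ∑ i : Fin 3, q (Fin.castAdd 3 i) ^ 2 ≤ ∑ j : Fin 6, q j ^ 2
  rw [← Finset.sum_image (g := Fin.castAdd 3) (f := fun j => q j ^ 2)
    (fun x _ y _ h => Fin.castAdd_injective _ _ h)]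
  exact Finset.sum_le_sum_of_subset_of_nonneg (Finset.subset_univ _)
    (fun _ _ _ => sq_nonneg _)

lemma norm_split_snd_le (q : E6) : ‖(split q).2‖ ≤ ‖q‖ := by
  rw [EuclideanSpace.norm_eq, EuclideanSpace.norm_eq]
  apply Real.sqrt_le_sqrt
  simp only [Real.norm_eq_abs, sq_abs]
  show ∑ i : Fin 3, q (Fin.natAdd 3 i) ^ 2 ≤ ∑ j : Fin 6, q j ^ 2
  have hinj : Function.Injective (Fin.natAdd 3 : Fin 3 → Fin 6) := by
    intro a b h
    simpa [Fin.ext_iff] using h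
  rw [← Finset.sum_image (g := Fin.natAdd 3) (f := fun j => q j ^ 2)
    (fun x _ y _ h => hinj h)]
  exact Finset.sum_le_sum_of_subset_of_nonneg (Finset.subset_univ _)
    (fun _ _ _ => sq_nonneg _)

lemma continuous_split_fst : Continuous fun q : E6 => (split q).1 := by
  unfold split
  exact (PiLp.continuous_toLp 2 _).comp (continuous_pi fun i => (continuous_apply _).comp (PiLp.continuous_ofLp 2 _))

lemma continuous_split_snd : Continuous fun q : E6 => (split q).2 := by
  unfold split
  exact (PiLp.continuous_toLp 2 _).comp (continuous_pi fun i => (continuous_apply _).comp (PiLp.continuous_ofLp 2 _))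

/-- Scaling of the Fourier transform. -/
lemma fourier_scale (f : E6 → ℂ) {ℓ : ℝ} (hℓ : 0 < ℓ) (p : E6) :
    𝓕 (fun x => f (ℓ⁻¹ • x)) p = (ℓ ^ 6 : ℝ) • 𝓕 f (ℓ • p) := by
  rw [Real.fourier_eq, Real.fourier_eq, ← integral_smul]
  have key : ∀ x : E6, 𝐞 (-⟪x, p⟫) • f (ℓ⁻¹ • x)
      = (fun y => 𝐞 (-⟪y, ℓ • p⟫) • f y) (ℓ⁻¹ • x) := by
    intro x
    simp only [real_inner_smul_left, real_inner_smul_right]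
    rw [mul_inv_cancel_left₀ hℓ.ne']
  calc ∫ v, 𝐞 (-⟪v, p⟫) • f (ℓ⁻¹ • v)
      = ∫ v, (fun y => 𝐞 (-⟪y, ℓ • p⟫) • f y) (ℓ⁻¹ • v) :=
        integral_congr_ae (Filter.Eventually.of_forall key)
    _ = (ℓ ^ Module.finrank ℝ E6) • ∫ y, 𝐞 (-⟪y, ℓ • p⟫) • f y :=
        Measure.integral_comp_inv_smul_of_nonneg volume
          (fun y => 𝐞 (-⟪y, ℓ • p⟫) • f y) hℓ.le
    _ = ∫ a, (ℓ ^ 6 : ℝ) • 𝐞 (-⟪a, ℓ • p⟫) • f a := by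
        rw [integral_smul]
        norm_num [finrank_euclideanSpace]

lemma fourier_const_smul (f : E6 → ℂ) (c : ℝ) (p : E6) :
    𝓕 (fun x => c • f x) p = c • 𝓕 f p := by
  rw [Real.fourier_eq, Real.fourier_eq, ← integral_smul]
  congr 1
  ext x
  rw [smul_comm]

/-- A smooth compactly supported function as a Schwartz map. -/
def mkS (f : E6 → ℂ) (h1 : ContDiff ℝ (⊤ : ℕ∞) f) (h2 : HasCompactSupport f) :
    SchwartzMap E6 ℂ where
  toFun := f
  smooth' := h1.of_le (by simp)
  decay' := by
    intro k n
    have hc : Continuous fun x : E6 => ‖x‖ ^ k * ‖iteratedFDeriv ℝ n f x‖ :=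
      (continuous_norm.pow k).mul (h1.continuous_iteratedFDeriv (by exact_mod_cast le_top)).norm
    have hs : HasCompactSupport fun x : E6 => ‖x‖ ^ k * ‖iteratedFDeriv ℝ n f x‖ :=
      HasCompactSupport.mul_left ((h2.iteratedFDeriv n).norm)
    obtain ⟨C, hC⟩ := hc.bounded_above_of_compact_support hs
    exact ⟨C, fun x => (Real.le_norm_self _).trans (hC x)⟩

/-- The key integrable majorant. -/
lemma integrable_maj (f : E6 → ℂ) (h1 : ContDiff ℝ (⊤ : ℕ∞) f) (h2 : HasCompactSupport f) :
    Integrable (fun q : E6 => (‖(split q).1‖ + ‖(split q).2‖) * ‖𝓕 f q‖ ^ 2) := by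
  set S : SchwartzMap E6 ℂ := mkS f h1 h2 with hS
  set F : SchwartzMap E6 ℂ := SchwartzMap.fourierTransformCLM ℂ S with hF
  have hFf : ∀ q, F q = 𝓕 f q := fun q => rfl
  obtain ⟨B, hB0, hB⟩ := F.decay 0 0
  have hBle : ∀ q, ‖F q‖ ≤ B := by
    intro q
    have := hB q
    simpa [norm_iteratedFDeriv_zero] using this
  have hint : Integrable (fun q : E6 => ‖q‖ ^ 1 * ‖F q‖) := F.integrable_pow_mul volume 1
  have hmaj : Integrable (fun q : E6 => (2 * B) * (‖q‖ ^ 1 * ‖F q‖)) := hint.const_mul _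
  apply hmaj.mono'
  · apply Continuous.aestronglyMeasurable
    apply Continuous.mul
    · exact (continuous_split_fst.norm.add continuous_split_snd.norm)
    · exact ((show Continuous (𝓕 f) from F.continuous).norm.pow 2)
  · refine Filter.Eventually.of_forall fun q => ?_
    have h1n : ‖(split q).1‖ ≤ ‖q‖ := norm_split_fst_le q
    have h2n : ‖(split q).2‖ ≤ ‖q‖ := norm_split_snd_le q
    have hFq : ‖𝓕 f q‖ = ‖F q‖ := by rw [hFf]
    have hnn : (0:ℝ) ≤ (‖(split q).1‖ + ‖(split q).2‖) * ‖𝓕 f q‖ ^ 2 := by positivity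
    rw [Real.norm_of_nonneg hnn, hFq]
    have hb := hBle q
    have h0 : (0:ℝ) ≤ ‖F q‖ := norm_nonneg _
    have h0q : (0:ℝ) ≤ ‖q‖ := norm_nonneg _
    simp only [pow_one, pow_two]
    calc (‖(split q).1‖ + ‖(split q).2‖) * (‖F q‖ * ‖F q‖)
        ≤ (‖q‖ + ‖q‖) * (‖F q‖ * ‖F q‖) := by
          apply mul_le_mul_of_nonneg_right (by linarith) (by positivity)
      _ = 2 * (‖q‖ * ‖F q‖) * ‖F q‖ := by ring
      _ ≤ 2 * (‖q‖ * ‖F q‖) * B := by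
          apply mul_le_mul_of_nonneg_left hb (by positivity)
      _ = 2 * B * (‖q‖ * ‖F q‖) := by ring

lemma sqrt_one_add_sub_le {a : ℝ} (ha : 0 ≤ a) : Real.sqrt (a ^ 2 + 1) - 1 ≤ a := by
  nlinarith [Real.sq_sqrt (by positivity : (0:ℝ) ≤ a ^ 2 + 1),
    Real.sqrt_nonneg (a ^ 2 + 1)]

lemma sqrt_one_add_sub_nonneg (a : ℝ) : 0 ≤ Real.sqrt (a ^ 2 + 1) - 1 := by
  nlinarith [Real.sq_sqrt (by positivity : (0:ℝ) ≤ a ^ 2 + 1),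
    Real.sqrt_nonneg (a ^ 2 + 1)]

set_option maxHeartbeats 2000000 in
/-- If some normalized smooth compactly supported `ψ` has
`⟨ψ, (√(-Δ₁)+√(-Δ₂))ψ⟩ < Q ⟨ψ, |r₁-r₂|⁻¹ψ⟩`, then the relativistic Coulomb Hamiltonian
`H = √(-Δ₁+1) + √(-Δ₂+1) - 2 - Q/|r₁-r₂|` is unbounded below on normalized states. -/
theorem relativistic_instability_first_kind (Q : ℝ)
    (h : ∃ ψ : EuclideanSpace ℝ (Fin 6) → ℂ,
      ContDiff ℝ (⊤ : ℕ∞) ψ ∧ HasCompactSupport ψ ∧ (∫ x, ‖ψ x‖ ^ 2) = 1 ∧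
      kinForm 0 ψ < Q * coulForm ψ) :
    ∀ M : ℝ, ∃ φ : EuclideanSpace ℝ (Fin 6) → ℂ,
      ContDiff ℝ (⊤ : ℕ∞) φ ∧ HasCompactSupport φ ∧ (∫ x, ‖φ x‖ ^ 2) = 1 ∧
      kinForm 1 φ - Q * coulForm φ < M := by
  obtain ⟨ψ, h1, h2, h3, h4⟩ := h
  intro M
  have hex : ∃ ℓ : ℝ, 0 < ℓ ∧ ℓ⁻¹ * (kinForm 0 ψ - Q * coulForm ψ) < M := by
    have hDpos : 0 < Q * coulForm ψ - kinForm 0 ψ := by linarith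
    have hM1 : (0:ℝ) < |M| + 1 := by positivity
    refine ⟨(Q * coulForm ψ - kinForm 0 ψ) / (|M| + 1), div_pos hDpos hM1, ?_⟩
    have hinv : ((Q * coulForm ψ - kinForm 0 ψ) / (|M| + 1))⁻¹
        = (|M| + 1) / (Q * coulForm ψ - kinForm 0 ψ) := by
      rw [inv_div]
    rw [hinv]
    have : (|M| + 1) / (Q * coulForm ψ - kinForm 0 ψ) * (kinForm 0 ψ - Q * coulForm ψ)
        = -(|M| + 1) := by
      field_simp
      ring
    rw [this]
    have := neg_abs_le M
    linarith
  obtain ⟨ℓ, hℓ, hℓM⟩ := hex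
  obtain ⟨c, hcdef⟩ : ∃ c : ℝ, c = (ℓ ^ 3)⁻¹ := ⟨_, rfl⟩
  have hc : 0 < c := by rw [hcdef]; positivity
  have hc2 : c ^ 2 * ℓ ^ 6 = 1 := by rw [hcdef]; field_simp
  refine ⟨fun x => c • ψ (ℓ⁻¹ • x), ?_, ?_, ?_, ?_⟩
  · exact (h1.comp (contDiff_id.const_smul ℓ⁻¹)).const_smul c
  · have h' : HasCompactSupport fun x : E6 => ψ (ℓ⁻¹ • x) :=
      h2.comp_homeomorph (Homeomorph.smulOfNeZero ℓ⁻¹ (inv_ne_zero hℓ.ne'))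
    exact h'.smul_left (f := fun _ : E6 => c)
  · -- normalization
    have key : ∀ x : E6, ‖c • ψ (ℓ⁻¹ • x)‖ ^ 2
        = c ^ 2 * (fun y => ‖ψ y‖ ^ 2) (ℓ⁻¹ • x) := by
      intro x
      rw [norm_smul, Real.norm_of_nonneg hc.le]
      ring
    calc (∫ x, ‖c • ψ (ℓ⁻¹ • x)‖ ^ 2)
        = ∫ x, c ^ 2 * (fun y => ‖ψ y‖ ^ 2) (ℓ⁻¹ • x) :=
          integral_congr_ae (Filter.Eventually.of_forall key)
      _ = c ^ 2 * ∫ x, (fun y => ‖ψ y‖ ^ 2) (ℓ⁻¹ • x) := integral_const_mul _ _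
      _ = c ^ 2 * ((ℓ ^ Module.finrank ℝ E6) • ∫ y, ‖ψ y‖ ^ 2) := by
          rw [Measure.integral_comp_inv_smul_of_nonneg volume (fun y => ‖ψ y‖ ^ 2) hℓ.le]
      _ = 1 := by
          rw [h3, finrank_euclideanSpace]
          simpa [Fintype.card_fin] using hc2
  · -- energy bound
    have hnormφ : ∀ x : E6, ‖c • ψ (ℓ⁻¹ • x)‖ ^ 2 = c ^ 2 * ‖ψ (ℓ⁻¹ • x)‖ ^ 2 := by
      intro x
      rw [norm_smul, Real.norm_of_nonneg hc.le]
      ring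
    set φ : E6 → ℂ := fun x => c • ψ (ℓ⁻¹ • x) with hφ
    -- Coulomb form scales exactly
    have hcoul : coulForm φ = ℓ⁻¹ * coulForm ψ := by
      have key : ∀ x : E6, ‖(split x).1 - (split x).2‖⁻¹ * ‖φ x‖ ^ 2
          = (fun y => (ℓ⁻¹ * c ^ 2) * (‖(split y).1 - (split y).2‖⁻¹ * ‖ψ y‖ ^ 2)) (ℓ⁻¹ • x) := by
        intro x
        have hsp : (split (ℓ⁻¹ • x)).1 - (split (ℓ⁻¹ • x)).2
            = ℓ⁻¹ • ((split x).1 - (split x).2) := by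
          rw [split_smul]
          simp [smul_sub]
        simp only [hsp, norm_smul, Real.norm_of_nonneg (inv_nonneg.2 hℓ.le), mul_inv, inv_inv, hφ,
          hnormφ x, Real.norm_of_nonneg hc.le]
        have hll : ℓ⁻¹ * ℓ = 1 := inv_mul_cancel₀ hℓ.ne'
        linear_combination (-(c ^ 2 * ‖(split x).1 - (split x).2‖⁻¹ * ‖ψ (ℓ⁻¹ • x)‖ ^ 2)) * hll
      calc coulForm φ
          = ∫ x, (fun y => (ℓ⁻¹ * c ^ 2) * (‖(split y).1 - (split y).2‖⁻¹ * ‖ψ y‖ ^ 2)) (ℓ⁻¹ • x) :=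
            integral_congr_ae (Filter.Eventually.of_forall key)
        _ = (ℓ ^ Module.finrank ℝ E6) •
            ∫ y, (ℓ⁻¹ * c ^ 2) * (‖(split y).1 - (split y).2‖⁻¹ * ‖ψ y‖ ^ 2) :=
            Measure.integral_comp_inv_smul_of_nonneg volume
              (fun y => (ℓ⁻¹ * c ^ 2) * (‖(split y).1 - (split y).2‖⁻¹ * ‖ψ y‖ ^ 2)) hℓ.le
        _ = (ℓ ^ 6) * ((ℓ⁻¹ * c ^ 2) * coulForm ψ) := by
            rw [integral_const_mul, finrank_euclideanSpace]
            simp [coulForm]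
        _ = ℓ⁻¹ * coulForm ψ := by
            have : ℓ ^ 6 * (ℓ⁻¹ * c ^ 2 * coulForm ψ) = (c ^ 2 * ℓ ^ 6) * ℓ⁻¹ * coulForm ψ := by
              ring
            rw [this, hc2, one_mul]
    -- Fourier transform of φ
    have h𝓕 : ∀ p, ‖𝓕 φ p‖ ^ 2 = ℓ ^ 6 * ‖𝓕 ψ (ℓ • p)‖ ^ 2 := by
      intro p
      have hval : 𝓕 φ p = c • ((ℓ ^ 6 : ℝ) • 𝓕 ψ (ℓ • p)) := by
        rw [hφ]
        rw [fourier_const_smul (fun x => ψ (ℓ⁻¹ • x)) c p, fourier_scale ψ hℓ p]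
      rw [hval, smul_smul, norm_smul, Real.norm_of_nonneg (by positivity), mul_pow]
      have : (c * ℓ ^ 6) ^ 2 = (c ^ 2 * ℓ ^ 6) * ℓ ^ 6 := by ring
      rw [this, hc2, one_mul]
    -- kinetic form bound
    have hkin : kinForm 1 φ ≤ ℓ⁻¹ * kinForm 0 ψ := by
      have hW : ∀ p : E6,
          ((Real.sqrt (‖(split p).1‖ ^ 2 + 1 ^ 2) - 1)
            + (Real.sqrt (‖(split p).2‖ ^ 2 + 1 ^ 2) - 1)) * ‖𝓕 φ p‖ ^ 2
          = (fun q => ℓ ^ 6 * (((Real.sqrt (‖(split (ℓ⁻¹ • q)).1‖ ^ 2 + 1 ^ 2) - 1)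
            + (Real.sqrt (‖(split (ℓ⁻¹ • q)).2‖ ^ 2 + 1 ^ 2) - 1)) * ‖𝓕 ψ q‖ ^ 2)) (ℓ • p) := by
        intro p
        have hq : ℓ⁻¹ • (ℓ • p) = p := by
          rw [smul_smul, inv_mul_cancel₀ hℓ.ne', one_smul]
        simp only [hq, h𝓕 p]
        ring
      have step1 : kinForm 1 φ
          = ∫ q, ((Real.sqrt (‖(split (ℓ⁻¹ • q)).1‖ ^ 2 + 1 ^ 2) - 1)
            + (Real.sqrt (‖(split (ℓ⁻¹ • q)).2‖ ^ 2 + 1 ^ 2) - 1)) * ‖𝓕 ψ q‖ ^ 2 := by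
        calc kinForm 1 φ
            = ∫ p, (fun q => ℓ ^ 6 * (((Real.sqrt (‖(split (ℓ⁻¹ • q)).1‖ ^ 2 + 1 ^ 2) - 1)
              + (Real.sqrt (‖(split (ℓ⁻¹ • q)).2‖ ^ 2 + 1 ^ 2) - 1)) * ‖𝓕 ψ q‖ ^ 2)) (ℓ • p) :=
              integral_congr_ae (Filter.Eventually.of_forall hW)
          _ = |(ℓ ^ Module.finrank ℝ E6)⁻¹| •
              ∫ q, ℓ ^ 6 * (((Real.sqrt (‖(split (ℓ⁻¹ • q)).1‖ ^ 2 + 1 ^ 2) - 1)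
              + (Real.sqrt (‖(split (ℓ⁻¹ • q)).2‖ ^ 2 + 1 ^ 2) - 1)) * ‖𝓕 ψ q‖ ^ 2) :=
              Measure.integral_comp_smul volume
                (fun q => ℓ ^ 6 * (((Real.sqrt (‖(split (ℓ⁻¹ • q)).1‖ ^ 2 + 1 ^ 2) - 1)
                  + (Real.sqrt (‖(split (ℓ⁻¹ • q)).2‖ ^ 2 + 1 ^ 2) - 1)) * ‖𝓕 ψ q‖ ^ 2)) ℓ
          _ = _ := by
              rw [integral_const_mul, finrank_euclideanSpace]
              simp only [Fintype.card_fin, smul_eq_mul]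
              rw [abs_of_nonneg (by positivity : (0:ℝ) ≤ (ℓ ^ 6)⁻¹)]
              rw [← mul_assoc, inv_mul_cancel₀ (by positivity : (ℓ:ℝ) ^ 6 ≠ 0), one_mul]
      rw [step1]
      have hk0 : kinForm 0 ψ = ∫ q, (‖(split q).1‖ + ‖(split q).2‖) * ‖𝓕 ψ q‖ ^ 2 := by
        unfold kinForm
        congr 1
        ext q
        simp [Real.sqrt_sq (norm_nonneg _)]
      rw [hk0, ← integral_const_mul]
      apply integral_mono_of_nonneg
      · refine Filter.Eventually.of_forall fun q => ?_
        have n1 := sqrt_one_add_sub_nonneg ‖(split (ℓ⁻¹ • q)).1‖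
        have n2 := sqrt_one_add_sub_nonneg ‖(split (ℓ⁻¹ • q)).2‖
        simp only [one_pow] at *
        positivity
      · exact (integrable_maj ψ h1 h2).const_mul _
      · refine Filter.Eventually.of_forall fun q => ?_
        have hs1 : ‖(split (ℓ⁻¹ • q)).1‖ = ℓ⁻¹ * ‖(split q).1‖ := by
          rw [split_smul]
          simp [norm_smul, Real.norm_of_nonneg (inv_nonneg.2 hℓ.le)]
        have hs2 : ‖(split (ℓ⁻¹ • q)).2‖ = ℓ⁻¹ * ‖(split q).2‖ := by
          rw [split_smul]
          simp [norm_smul, Real.norm_of_nonneg (inv_nonneg.2 hℓ.le)]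
        have hb1 : Real.sqrt (‖(split (ℓ⁻¹ • q)).1‖ ^ 2 + 1 ^ 2) - 1 ≤ ℓ⁻¹ * ‖(split q).1‖ := by
          rw [hs1, one_pow]
          exact sqrt_one_add_sub_le (by positivity)
        have hb2 : Real.sqrt (‖(split (ℓ⁻¹ • q)).2‖ ^ 2 + 1 ^ 2) - 1 ≤ ℓ⁻¹ * ‖(split q).2‖ := by
          rw [hs2, one_pow]
          exact sqrt_one_add_sub_le (by positivity)
        have hsq : (0:ℝ) ≤ ‖𝓕 ψ q‖ ^ 2 := by positivity
        calc ((Real.sqrt (‖(split (ℓ⁻¹ • q)).1‖ ^ 2 + 1 ^ 2) - 1)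
              + (Real.sqrt (‖(split (ℓ⁻¹ • q)).2‖ ^ 2 + 1 ^ 2) - 1)) * ‖𝓕 ψ q‖ ^ 2
            ≤ (ℓ⁻¹ * ‖(split q).1‖ + ℓ⁻¹ * ‖(split q).2‖) * ‖𝓕 ψ q‖ ^ 2 := by
              apply mul_le_mul_of_nonneg_right _ hsq
              linarith
          _ = ℓ⁻¹ * ((‖(split q).1‖ + ‖(split q).2‖) * ‖𝓕 ψ q‖ ^ 2) := by ring
    -- conclusion
    have hfinal : kinForm 1 φ - Q * coulForm φ ≤ ℓ⁻¹ * (kinForm 0 ψ - Q * coulForm ψ) := by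
      rw [hcoul]
      nlinarith [hkin]
    linarith

end
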